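/- Let h be Exp(1), independent of I ≥ 0, and suppose E[e^{−uI}] = exp(−c u^{2/α}) for all u > 0 with constants c > 0, α > 2, and let noise σ² ≥ 0. Let R ≥ 0 have density f(x) = 2πλ x e^{−πλx²} independent of (h, I). Then E[log₂(1 + h R^{−α}/(I + σ²))] = ∫_0^∞ ∫_0^∞ πλ exp(−(2^t − 1) σ² z^{α/2} − c (2^t −1)^{2/α} z − πλ z) dz dt. -/

import Mathlib

/-!
The rate is `∫₀^∞ P(log₂(1 + γ) > t) dt`, and `log₂(1 + γ) > t` iff `h > u (I + σ²) R^α` with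
`u = 2^t - 1`. As `h` is `Exp(1)` and independent of `(I, R)`, this probability is
`E[exp(-u (I + σ²) R^α)]`; conditioning on `R`, the `I`-part is the Laplace transform
`exp(-c (u R^α)^{2/α}) = exp(-c u^{2/α} R²)`, and integrating against the density of `R` with
`z = R²` gives the inner integral. The same Laplace transform forces `P(I = 0) = 0`, so that
`I + σ² > 0` almost surely even when `σ² = 0`.
-/

open Real MeasureTheory ProbabilityTheory Set Filter Topology
open scoped ENNReal

section Independence

variable {Ω β γ δ : Type*} [MeasurableSpace Ω] [MeasurableSpace β] [MeasurableSpace γ]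
  [MeasurableSpace δ] {P : Measure Ω} [IsFiniteMeasure P]

theorem indepFun_prodMk_of_indepFun_of_prodMk_indepFun {X : Ω → β} {Y : Ω → γ} {Z : Ω → δ}
    (hX : Measurable X) (hY : Measurable Y) (hZ : Measurable Z) (hXY : X ⟂ᵢ[P] Y)
    (hXYZ : (fun ω => (X ω, Y ω)) ⟂ᵢ[P] Z) : X ⟂ᵢ[P] (fun ω => (Y ω, Z ω)) := by
  have hYZ : P.map (fun ω => (Y ω, Z ω)) = (P.map Y).prod (P.map Z) :=
    (indepFun_iff_map_prod_eq_prod_map_map hY.aemeasurable hZ.aemeasurable).1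
      (hXYZ.comp measurable_snd measurable_id)
  have hXYZ' :
      P.map (fun ω => ((X ω, Y ω), Z ω)) = ((P.map X).prod (P.map Y)).prod (P.map Z) := by
    rw [← (indepFun_iff_map_prod_eq_prod_map_map hX.aemeasurable hY.aemeasurable).1 hXY]
    exact (indepFun_iff_map_prod_eq_prod_map_map (hX.prodMk hY).aemeasurable
      hZ.aemeasurable).1 hXYZ
  rw [indepFun_iff_map_prod_eq_prod_map_map hX.aemeasurable (hY.prodMk hZ).aemeasurable, hYZ]
  calc P.map (fun ω => (X ω, Y ω, Z ω))
      = (P.map (fun ω => ((X ω, Y ω), Z ω))).map MeasurableEquiv.prodAssoc := by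
        rw [Measure.map_map MeasurableEquiv.prodAssoc.measurable ((hX.prodMk hY).prodMk hZ)]
        rfl
    _ = (P.map X).prod ((P.map Y).prod (P.map Z)) := by
        rw [hXYZ']
        exact (measurePreserving_prodAssoc _ _ _).map_eq

theorem lintegral_comp_eq_lintegral_lintegral_of_indepFun {X : Ω → β} {Y : Ω → γ}
    (hX : Measurable X) (hY : Measurable Y) (hXY : X ⟂ᵢ[P] Y) {F : β × γ → ℝ≥0∞}
    (hF : Measurable F) :
    ∫⁻ ω, F (X ω, Y ω) ∂P = ∫⁻ y, ∫⁻ ω, F (X ω, y) ∂P ∂(P.map Y) := by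
  rw [← lintegral_map hF (hX.prodMk hY),
    (indepFun_iff_map_prod_eq_prod_map_map hX.aemeasurable hY.aemeasurable).1 hXY,
    lintegral_prod_symm _ hF.aemeasurable]
  exact lintegral_congr fun y => lintegral_map (hF.comp (measurable_id.prodMk measurable_const)) hX

theorem measure_lt_eq_lintegral_exp_of_indepFun {T : Ω → ℝ} {V : Ω → β} (hT : Measurable T)
    (hV : Measurable V) (hTV : T ⟂ᵢ[P] V)
    (hTail : ∀ a, 0 ≤ a → P {ω | a < T ω} = ENNReal.ofReal (exp (-a)))
    {φ : β → ℝ} (hφ : Measurable φ) (hφ0 : ∀ᵐ ω ∂P, 0 ≤ φ (V ω)) :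
    P {ω | φ (V ω) < T ω} = ∫⁻ ω, ENNReal.ofReal (exp (-φ (V ω))) ∂P := by
  have hS : MeasurableSet {p : ℝ × β | φ p.2 < p.1} :=
    measurableSet_lt (hφ.comp measurable_snd) measurable_fst
  have hφ0' : ∀ᵐ v ∂(P.map V), 0 ≤ φ v :=
    (ae_map_iff hV.aemeasurable (measurableSet_le measurable_const hφ)).2 hφ0
  calc P {ω | φ (V ω) < T ω}
      = P.map (fun ω => (T ω, V ω)) {p : ℝ × β | φ p.2 < p.1} :=
        (Measure.map_apply (hT.prodMk hV) hS).symm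
    _ = ∫⁻ v, P.map T (Ioi (φ v)) ∂(P.map V) := by
        rw [(indepFun_iff_map_prod_eq_prod_map_map hT.aemeasurable hV.aemeasurable).1 hTV,
          Measure.prod_apply_symm hS]
        rfl
    _ = ∫⁻ v, ENNReal.ofReal (exp (-φ v)) ∂(P.map V) := by
        refine lintegral_congr_ae ?_
        filter_upwards [hφ0'] with v hv
        rw [Measure.map_apply hT measurableSet_Ioi]
        exact hTail _ hv
    _ = ∫⁻ ω, ENNReal.ofReal (exp (-φ (V ω))) ∂P :=
        lintegral_map (by fun_prop) hV

end Independence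

section Laplace

variable {Ω : Type*} [MeasurableSpace Ω] {μ : Measure Ω} {X : Ω → ℝ} {c p : ℝ}

theorem measure_eq_zero_of_tendsto_lintegral_exp_neg_mul (hX : Measurable X)
    (hL : Tendsto (fun s => ∫⁻ ω, ENNReal.ofReal (exp (-(s * X ω))) ∂μ) atTop (𝓝 0)) :
    μ {ω | X ω = 0} = 0 := by
  have hmeas : MeasurableSet {ω | X ω = 0} := hX (measurableSet_singleton 0)
  refine le_antisymm (ge_of_tendsto' hL fun s => ?_) bot_le
  calc μ {ω | X ω = 0} = ∫⁻ ω in {ω | X ω = 0}, ENNReal.ofReal (exp (-(s * X ω))) ∂μ := by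
        rw [setLIntegral_congr_fun hmeas fun ω (hω : X ω = 0) => by
          rw [hω, mul_zero, neg_zero, exp_zero, ENNReal.ofReal_one]]
        exact (setLIntegral_one _).symm
    _ ≤ ∫⁻ ω, ENNReal.ofReal (exp (-(s * X ω))) ∂μ := setLIntegral_le_lintegral _ _

theorem lintegral_exp_neg_mul_eq_ofReal_integral [IsFiniteMeasure μ] (hX : Measurable X)
    (hX0 : ∀ ω, 0 ≤ X ω) {s : ℝ} (hs : 0 ≤ s) :
    ∫⁻ ω, ENNReal.ofReal (exp (-(s * X ω))) ∂μ = ENNReal.ofReal (∫ ω, exp (-(s * X ω)) ∂μ) := by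
  have hint : Integrable (fun ω => exp (-(s * X ω))) μ := by
    refine Integrable.of_bound (by fun_prop) 1 (Eventually.of_forall fun ω => ?_)
    rw [norm_of_nonneg (exp_pos _).le, exp_le_one_iff, neg_nonpos]
    exact mul_nonneg hs (hX0 ω)
  exact (ofReal_integral_eq_lintegral_ofReal hint
    (Eventually.of_forall fun ω => (exp_pos _).le)).symm

theorem measure_eq_zero_of_laplace_eq_exp_neg_rpow [IsFiniteMeasure μ] (hX : Measurable X)
    (hX0 : ∀ ω, 0 ≤ X ω) (hc : 0 < c) (hp : 0 < p)
    (hLap : ∀ s, 0 < s → ∫ ω, exp (-(s * X ω)) ∂μ = exp (-(c * s ^ p))) :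
    μ {ω | X ω = 0} = 0 := by
  refine measure_eq_zero_of_tendsto_lintegral_exp_neg_mul hX ?_
  have hlim : Tendsto (fun s => ENNReal.ofReal (exp (-(c * s ^ p)))) atTop (𝓝 0) := by
    simpa using ENNReal.tendsto_ofReal (tendsto_exp_atBot.comp
      (tendsto_neg_atTop_atBot.comp ((tendsto_rpow_atTop hp).const_mul_atTop hc)))
  refine hlim.congr' ?_
  filter_upwards [eventually_gt_atTop 0] with s hs
  rw [lintegral_exp_neg_mul_eq_ofReal_integral hX hX0 hs.le, hLap s hs]

theorem lintegral_exp_neg_mul_add_eq [IsFiniteMeasure μ] (hX : Measurable X)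
    (hX0 : ∀ ω, 0 ≤ X ω) (hLap : ∀ s, 0 < s → ∫ ω, exp (-(s * X ω)) ∂μ = exp (-(c * s ^ p)))
    (b : ℝ) {s : ℝ} (hs : 0 < s) :
    ∫⁻ ω, ENNReal.ofReal (exp (-(s * (X ω + b)))) ∂μ =
      ENNReal.ofReal (exp (-(s * b)) * exp (-(c * s ^ p))) := by
  have hsplit : ∀ ω, ENNReal.ofReal (exp (-(s * (X ω + b)))) =
      ENNReal.ofReal (exp (-(s * b))) * ENNReal.ofReal (exp (-(s * X ω))) := fun ω => by
    rw [← ENNReal.ofReal_mul (exp_pos _).le, ← exp_add]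
    ring_nf
  simp_rw [hsplit]
  rw [lintegral_const_mul _ (by fun_prop), lintegral_exp_neg_mul_eq_ofReal_integral hX hX0 hs.le,
    hLap s hs, ENNReal.ofReal_mul (exp_pos _).le]

end Laplace

section Density

variable {f : ℝ → ℝ}

theorem ae_pos_withDensity_ite_pos (hf : Measurable f) :
    ∀ᵐ x ∂(volume.withDensity fun x => ENNReal.ofReal (if 0 < x then f x else 0)), 0 < x := by
  rw [ae_withDensity_iff (hf.ite measurableSet_Ioi measurable_const).ennreal_ofReal]
  refine Eventually.of_forall fun x hx => ?_
  by_contra hx0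
  simp [hx0] at hx

theorem lintegral_withDensity_ite_pos (hf : Measurable f) {G : ℝ → ℝ≥0∞} (hG : Measurable G) :
    ∫⁻ x, G x ∂(volume.withDensity fun x => ENNReal.ofReal (if 0 < x then f x else 0)) =
      ∫⁻ x in Ioi 0, ENNReal.ofReal (f x) * G x := by
  rw [lintegral_withDensity_eq_lintegral_mul _
    (hf.ite measurableSet_Ioi measurable_const).ennreal_ofReal hG,
    ← lintegral_indicator measurableSet_Ioi]
  refine lintegral_congr fun x => ?_
  by_cases hx : 0 < x <;> simp [hx]

theorem lintegral_Ioi_comp_sq (G : ℝ → ℝ≥0∞) :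
    ∫⁻ x in Ioi 0, ENNReal.ofReal (2 * x) * G (x ^ 2) = ∫⁻ z in Ioi 0, G z := by
  have himage : (fun x : ℝ => x ^ 2) '' Ioi 0 = Ioi 0 := by
    refine Subset.antisymm (image_subset_iff.2 fun x (hx : 0 < x) => by simp [hx])
      fun z (hz : 0 < z) => ⟨√z, sqrt_pos.2 hz, sq_sqrt hz.le⟩
  conv_rhs => rw [← himage]
  rw [lintegral_image_eq_lintegral_abs_deriv_mul measurableSet_Ioi (f' := fun x => 2 * x)
    (fun x _ => by simpa using (hasDerivAt_pow 2 x).hasDerivWithinAt)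
    (fun x (hx : 0 < x) y (hy : 0 < y) hxy => by simpa [hx.le, hy.le] using hxy)]
  refine setLIntegral_congr_fun measurableSet_Ioi fun x (hx : 0 < x) => ?_
  simp [abs_of_pos hx]

end Density

theorem lt_logb_one_add_iff {t a r s α : ℝ} (ha : 0 ≤ a) (hr : 0 < r) (hs : 0 < s) :
    t < logb 2 (1 + a * r ^ (-α) / s) ↔ (2 ^ t - 1) * s * r ^ α < a := by
  rw [lt_logb_iff_rpow_lt one_lt_two (by positivity), ← sub_lt_iff_lt_add', lt_div_iff₀ hs,
    rpow_neg hr.le, ← div_eq_mul_inv, lt_div_iff₀ (rpow_pos_of_pos hr α)]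

theorem integral_eq_setIntegral_Ioi_integral_of_measure_lt {Ω β : Type*} [MeasurableSpace Ω]
    [MeasurableSpace β] {μ : Measure Ω} [IsFiniteMeasure μ] {ν : Measure β} [SFinite ν]
    {X : Ω → ℝ} (hX0 : 0 ≤ᵐ[μ] X) (hX : AEMeasurable X μ) {g : ℝ → β → ℝ}
    (hg : StronglyMeasurable (Function.uncurry g)) (hg0 : ∀ t y, 0 ≤ g t y)
    (hTail : ∀ t, 0 < t → μ {ω | t < X ω} = ∫⁻ y, ENNReal.ofReal (g t y) ∂ν) :
    ∫ ω, X ω ∂μ = ∫ t in Ioi 0, ∫ y, g t y ∂ν := by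
  have hF0 : 0 ≤ᵐ[volume.restrict (Ioi 0)] fun t => ∫ y, g t y ∂ν :=
    Eventually.of_forall fun t => integral_nonneg (hg0 t)
  rw [integral_eq_lintegral_of_nonneg_ae hX0 hX.aestronglyMeasurable,
    lintegral_eq_lintegral_meas_lt μ hX0 hX,
    integral_eq_lintegral_of_nonneg_ae hF0 hg.integral_prod_right'.aestronglyMeasurable]
  congr 1
  refine setLIntegral_congr_fun measurableSet_Ioi fun t ht => ?_
  rw [hTail t ht, integral_eq_lintegral_of_nonneg_ae (Eventually.of_forall (hg0 t))
    (hg.comp_measurable measurable_prodMk_left).aestronglyMeasurable,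
    ENNReal.ofReal_toReal (hTail t ht ▸ measure_ne_top μ _)]

section Rate

variable {Ω : Type*} [MeasurableSpace Ω] {P : Measure Ω} [IsFiniteMeasure P]
  {h I R : Ω → ℝ} {c α lam σ2 : ℝ}

theorem coverage_probability_eq (hh : Measurable h) (hI : Measurable I) (hR : Measurable R)
    (hα : α ≠ 0) (hlam : 0 ≤ lam) (hσ : 0 ≤ σ2)
    (hTail : ∀ a, 0 ≤ a → P {ω | a < h ω} = ENNReal.ofReal (exp (-a)))
    (hInn : ∀ ω, 0 ≤ I ω)
    (hLap : ∀ u, 0 < u → ∫ ω, exp (-(u * I ω)) ∂P = exp (-(c * u ^ (2 / α))))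
    (hhIR : h ⟂ᵢ[P] fun ω => (I ω, R ω)) (hIR : I ⟂ᵢ[P] R)
    (hRdens : P.map R = volume.withDensity (fun x =>
      ENNReal.ofReal (if 0 < x then 2 * π * lam * x * exp (-(π * lam * x ^ 2)) else 0)))
    {u : ℝ} (hu : 0 < u) :
    P {ω | u * (I ω + σ2) * R ω ^ α < h ω} =
      ∫⁻ z in Ioi 0, ENNReal.ofReal
        (π * lam * exp (-(u * σ2 * z ^ (α / 2)) - c * u ^ (2 / α) * z - π * lam * z)) := by
  have hRpos : ∀ᵐ x ∂(P.map R), 0 < x := hRdens ▸ ae_pos_withDensity_ite_pos (by fun_prop)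
  have hexponent : ∀ x, 0 < x →
      -(u * σ2 * (x ^ 2) ^ (α / 2)) - c * u ^ (2 / α) * x ^ 2 - π * lam * x ^ 2 =
        -(u * x ^ α * σ2) + -(c * (u * x ^ α) ^ (2 / α)) + -(π * lam * x ^ 2) := fun x hx => by
    rw [mul_rpow hu.le (rpow_nonneg hx.le _), ← rpow_mul hx.le, mul_div_cancel₀ _ hα, rpow_two,
      ← rpow_natCast, ← rpow_mul hx.le]
    ring_nf
  calc P {ω | u * (I ω + σ2) * R ω ^ α < h ω}
      = ∫⁻ ω, ENNReal.ofReal (exp (-(u * (I ω + σ2) * R ω ^ α))) ∂P :=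
        measure_lt_eq_lintegral_exp_of_indepFun hh (hI.prodMk hR) hhIR hTail
          (φ := fun q => u * (q.1 + σ2) * q.2 ^ α) (by fun_prop) <| by
          filter_upwards [ae_of_ae_map hR.aemeasurable hRpos] with ω hRω
          have hIω := hInn ω
          positivity
    _ = ∫⁻ x, ∫⁻ ω, ENNReal.ofReal (exp (-(u * (I ω + σ2) * x ^ α))) ∂P ∂(P.map R) :=
        lintegral_comp_eq_lintegral_lintegral_of_indepFun hI hR hIR
          (F := fun q => ENNReal.ofReal (exp (-(u * (q.1 + σ2) * q.2 ^ α)))) (by fun_prop)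
    _ = ∫⁻ x, ENNReal.ofReal (exp (-(u * x ^ α * σ2)) * exp (-(c * (u * x ^ α) ^ (2 / α))))
          ∂(P.map R) := by
        refine lintegral_congr_ae ?_
        filter_upwards [hRpos] with x hx
        simp_rw [mul_right_comm u _ (x ^ α)]
        exact lintegral_exp_neg_mul_add_eq hI hInn hLap σ2 (by positivity)
    _ = ∫⁻ x in Ioi 0, ENNReal.ofReal (2 * π * lam * x * exp (-(π * lam * x ^ 2))) *
          ENNReal.ofReal (exp (-(u * x ^ α * σ2)) * exp (-(c * (u * x ^ α) ^ (2 / α)))) := by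
        rw [hRdens, lintegral_withDensity_ite_pos (by fun_prop) (by fun_prop)]
    _ = ∫⁻ x in Ioi 0, ENNReal.ofReal (2 * x) * ENNReal.ofReal (π * lam *
          exp (-(u * σ2 * (x ^ 2) ^ (α / 2)) - c * u ^ (2 / α) * x ^ 2 - π * lam * x ^ 2)) := by
        refine setLIntegral_congr_fun measurableSet_Ioi fun x (hx : 0 < x) => ?_
        rw [← ENNReal.ofReal_mul (by positivity), ← ENNReal.ofReal_mul (by positivity),
          hexponent x hx, exp_add, exp_add]
        ring_nf
    _ = _ := lintegral_Ioi_comp_sq fun z => ENNReal.ofReal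
          (π * lam * exp (-(u * σ2 * z ^ (α / 2)) - c * u ^ (2 / α) * z - π * lam * z))

end Rate

/-- Expected Rayleigh-fading rate: let `h ~ Exp(1)`, interference `I ≥ 0` with Laplace
transform `E[e^{−uI}] = exp(−c u^{2/α})` (`c > 0`, `α > 2`), noise `σ² ≥ 0`, and let the
nearest-BS distance `R` have density `2πλ x e^{−πλx²}` on `(0,∞)` and be independent of
`(h, I)`.  Then
`E[log₂(1 + h R^{−α}/(I + σ²))]
  = ∫_0^∞ ∫_0^∞ πλ exp(−(2^t−1)σ² z^{α/2} − c(2^t−1)^{2/α} z − πλ z) dz dt`. -/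
theorem stmt_16 {Ω : Type*} [MeasurableSpace Ω] (P : Measure Ω) [IsProbabilityMeasure P]
    (h I R : Ω → ℝ) (hh : Measurable h) (hI : Measurable I) (hR : Measurable R)
    (c α lam σ2 : ℝ) (hc : 0 < c) (hα : 2 < α) (hlam : 0 < lam) (hσ : 0 ≤ σ2)
    (hhExp : ∀ a : ℝ, 0 ≤ a → (P {ω | h ω > a}).toReal = Real.exp (-a))
    (hInn : ∀ ω, 0 ≤ I ω)
    (hLap : ∀ u : ℝ, 0 < u → (∫ ω, Real.exp (-(u * I ω)) ∂P) = Real.exp (-(c * u ^ (2 / α))))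
    (hhIindep : IndepFun h I P)
    (hRindep : IndepFun (fun ω => (h ω, I ω)) R P)
    (hRdens : P.map R = volume.withDensity (fun x =>
      ENNReal.ofReal (if 0 < x then 2 * π * lam * x * Real.exp (-(π * lam * x ^ 2)) else 0))) :
    (∫ ω, Real.logb 2 (1 + h ω * (R ω) ^ (-α) / (I ω + σ2)) ∂P) =
      ∫ t in Set.Ioi (0 : ℝ), ∫ z in Set.Ioi (0 : ℝ),
        π * lam * Real.exp (-(((2 : ℝ) ^ t - 1) * σ2 * z ^ (α / 2))
          - c * ((2 : ℝ) ^ t - 1) ^ (2 / α) * z - π * lam * z) := by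
  have hα0 : 0 < α := by linarith
  have hTail : ∀ a, 0 ≤ a → P {ω | a < h ω} = ENNReal.ofReal (exp (-a)) := fun a ha => by
    rw [← hhExp a ha, ENNReal.ofReal_toReal (measure_ne_top _ _)]
  have hhpos : ∀ᵐ ω ∂P, 0 < h ω :=
    (ae_iff_measure_eq (measurableSet_lt measurable_const hh).nullMeasurableSet).2 (by simp [hTail])
  have hRpos : ∀ᵐ ω ∂P, 0 < R ω :=
    ae_of_ae_map hR.aemeasurable (hRdens ▸ ae_pos_withDensity_ite_pos (by fun_prop))
  have hIpos : ∀ᵐ ω ∂P, 0 < I ω + σ2 := by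
    have hI0 := measure_eq_zero_of_laplace_eq_exp_neg_rpow hI hInn hc (by positivity) hLap
    filter_upwards [measure_eq_zero_iff_ae_notMem.1 hI0] with ω hω
    exact add_pos_of_pos_of_nonneg ((hInn ω).lt_of_ne' hω) hσ
  have hcov := fun u (hu : (0 : ℝ) < u) => coverage_probability_eq hh hI hR hα0.ne' hlam.le hσ
    hTail hInn hLap (indepFun_prodMk_of_indepFun_of_prodMk_indepFun hh hI hR hhIindep hRindep)
    (hRindep.comp measurable_snd measurable_id) hRdens hu
  refine integral_eq_setIntegral_Ioi_integral_of_measure_lt ?_ (by simp only [logb]; fun_prop)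
    (by fun_prop (disch := bound) : Continuous _).stronglyMeasurable (fun t z => by positivity)
    fun t ht => ?_
  · filter_upwards [hhpos, hRpos, hIpos] with ω hhω hRω hIω
    exact logb_nonneg one_lt_two (le_add_of_nonneg_right (by positivity))
  · rw [← hcov _ (sub_pos.2 (one_lt_rpow one_lt_two ht))]
    refine measure_congr (eventuallyEq_set.2 ?_)
    filter_upwards [hhpos, hRpos, hIpos] with ω hhω hRω hIω
    exact lt_logb_one_add_iff hhω.le hRω hIω
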